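/- (Lower bound for the conditional variance of the stochastic heat convolution via the heat kernel.) Let p denote either the periodic heat kernel p^{per} or the Neumann heat kernel p^{Neu} on [0,1]. There exists a constant c > 0 such that for every 0 ≤ s < t ≤ 1 and every x ∈ [0,1]: ∫_s^t ∫_0^1 p_{t−r}(x,y)² dy dr ≥ c (t − s)^{1/2}. -/

import Mathlib

open MeasureTheory

/-- The one-dimensional Gaussian heat kernel `Γ(t,x) = (2πt)^{-1/2} exp(-x²/(2t))`. -/
noncomputable def heatGamma (t x : ℝ) : ℝ :=
  (2 * Real.pi * t) ^ (-(1:ℝ)/2) * Real.exp (-x ^ 2 / (2 * t))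

/-- The periodic heat kernel on `[0,1]`. -/
noncomputable def pPer (t x y : ℝ) : ℝ := ∑' n : ℤ, heatGamma t (x - y + n)

/-- The Neumann heat kernel on `[0,1]`. -/
noncomputable def pNeu (t x y : ℝ) : ℝ :=
  ∑' n : ℤ, (heatGamma t (x - y + 2 * n) + heatGamma t (x + y + 2 * n))

/-!
For `0 < τ ≤ 1` and `x, y ∈ [0,1]` both kernels dominate the free Gaussian `Γ(τ, x - y)` (the
`n = 0` image), and `Γ(τ, ·)² ≥ 3/(32τ)` on a window of width `√τ/2` around `x` inside `[0,1]`.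
Hence `∫₀¹ p_τ(x,y)² dy ≥ (3/64) τ^{-1/2}`, and integrating over `τ = t - r ∈ (0, t - s)` gives
`(3/32) (t - s)^{1/2}`.

The outer integral is a Bochner integral, which is `0` when the integrand is not integrable, so
the matching upper bound `∫₀¹ p_τ(x,y)² dy ≤ C τ^{-1/2}` is needed as well. It is
`sup p_τ · ∫₀¹ p_τ`: each image with `|n| ≤ 1` contributes at most `τ^{-1/2}` pointwise and `1`
in `L¹`, and since `Γ(τ,z) z² ≤ 1` each image with `|n| ≥ 2` contributes at most `4/n²`.
-/

open Real Set

local notation "S₂" => ∑' n : ℤ, 1 / (n : ℝ) ^ 2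

lemma rpow_neg_half_eq_inv_sqrt {x : ℝ} (hx : 0 ≤ x) : x ^ (-1/2 : ℝ) = (√x)⁻¹ := by
  rw [sqrt_eq_rpow, ← rpow_neg hx]; norm_num

section Gaussian

variable {τ : ℝ}

lemma continuous_heatGamma (τ : ℝ) : Continuous (heatGamma τ) := by
  unfold heatGamma; fun_prop

lemma heatGamma_neg (τ z : ℝ) : heatGamma τ (-z) = heatGamma τ z := by
  simp [heatGamma]

lemma heatGamma_nonneg (hτ : 0 ≤ τ) (z : ℝ) : 0 ≤ heatGamma τ z := by
  unfold heatGamma; positivity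

lemma heatGamma_le_rpow (hτ : 0 < τ) (z : ℝ) : heatGamma τ z ≤ τ ^ (-1/2 : ℝ) := by
  have hexp : exp (-z ^ 2 / (2 * τ)) ≤ 1 :=
    exp_le_one_iff.2 (div_nonpos_of_nonpos_of_nonneg (by nlinarith) (by positivity))
  have hpre : (2 * π * τ) ^ (-1/2 : ℝ) ≤ τ ^ (-1/2 : ℝ) :=
    rpow_le_rpow_of_nonpos hτ (by nlinarith [pi_gt_three]) (by norm_num)
  calc heatGamma τ z ≤ (2 * π * τ) ^ (-1/2 : ℝ) * 1 :=
        mul_le_mul_of_nonneg_left hexp (by positivity)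
    _ ≤ τ ^ (-1/2 : ℝ) := by rw [mul_one]; exact hpre

lemma heatGamma_sq (hτ : 0 < τ) (z : ℝ) :
    heatGamma τ z ^ 2 = (2 * π * τ)⁻¹ * exp (-z ^ 2 / τ) := by
  rw [heatGamma, mul_pow, ← rpow_natCast, ← rpow_mul (by positivity), ← exp_nat_mul,
    show (-1/2 : ℝ) * ((2 : ℕ) : ℝ) = -1 by norm_num, rpow_neg_one]
  congr 2
  field_simp
  ring

-- `u e^{-u} ≤ 1` for `u = z²/(2τ)`, and `2τ ≤ √(2πτ)` since `τ ≤ 1`.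
lemma heatGamma_mul_sq_le_one (hτ0 : 0 < τ) (hτ1 : τ ≤ 1) (z : ℝ) :
    heatGamma τ z * z ^ 2 ≤ 1 := by
  set u := z ^ 2 / (2 * τ)
  have hu : u * exp (-u) ≤ 1 := by
    rw [exp_neg, ← div_eq_mul_inv, div_le_one (exp_pos u)]
    linarith [add_one_le_exp u]
  have hz : z ^ 2 * exp (-z ^ 2 / (2 * τ)) ≤ 2 * τ :=
    calc z ^ 2 * exp (-z ^ 2 / (2 * τ)) = 2 * τ * (u * exp (-u)) := by
          simp only [u]; rw [neg_div]; field_simp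
      _ ≤ 2 * τ := mul_le_of_le_one_right (by positivity) hu
  have hpre : (2 * π * τ) ^ (-1/2 : ℝ) * (2 * τ) ≤ 1 := by
    rw [rpow_neg_half_eq_inv_sqrt (by positivity), inv_mul_le_one₀ (by positivity),
      le_sqrt (by positivity) (by positivity)]
    nlinarith [pi_gt_three]
  calc heatGamma τ z * z ^ 2
      = (2 * π * τ) ^ (-1/2 : ℝ) * (z ^ 2 * exp (-z ^ 2 / (2 * τ))) := by rw [heatGamma]; ring
    _ ≤ (2 * π * τ) ^ (-1/2 : ℝ) * (2 * τ) := by gcongr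
    _ ≤ 1 := hpre

lemma integrable_heatGamma (hτ : 0 < τ) : Integrable (heatGamma τ) := by
  have : heatGamma τ = fun z => (2 * π * τ) ^ (-1/2 : ℝ) * exp (-(2 * τ)⁻¹ * z ^ 2) := by
    ext z; rw [heatGamma]; congr 2; ring
  rw [this]
  exact (integrable_exp_neg_mul_sq (by positivity)).const_mul _

lemma integral_heatGamma (hτ : 0 < τ) : ∫ z, heatGamma τ z = 1 := by
  have : heatGamma τ = fun z => (2 * π * τ) ^ (-1/2 : ℝ) * exp (-(2 * τ)⁻¹ * z ^ 2) := by
    ext z; rw [heatGamma]; congr 2; ring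
  rw [this, integral_const_mul, integral_gaussian, div_inv_eq_mul,
    rpow_neg_half_eq_inv_sqrt (by positivity), show π * (2 * τ) = 2 * π * τ by ring]
  exact inv_mul_cancel₀ (by positivity)

lemma setIntegral_heatGamma_sub_le (hτ : 0 < τ) (c : ℝ) (s : Set ℝ) :
    ∫ y in s, heatGamma τ (c - y) ≤ 1 := by
  calc ∫ y in s, heatGamma τ (c - y) ≤ ∫ y, heatGamma τ (c - y) :=
        setIntegral_le_integral ((integrable_heatGamma hτ).comp_sub_left c)
          (.of_forall fun _ => heatGamma_nonneg hτ.le _)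
    _ = 1 := by rw [integral_sub_left_eq_self (heatGamma τ) volume c, integral_heatGamma hτ]

lemma div_le_heatGamma_sq_of_sq_le (hτ : 0 < τ) {z : ℝ} (hz : z ^ 2 ≤ τ / 4) :
    3 / (32 * τ) ≤ heatGamma τ z ^ 2 := by
  have hpre : (8 * τ)⁻¹ ≤ (2 * π * τ)⁻¹ :=
    inv_anti₀ (by positivity) (by nlinarith [pi_le_four])
  have hexp : 3 / 4 ≤ exp (-z ^ 2 / τ) := by
    have : z ^ 2 / τ ≤ 1 / 4 := by rw [div_le_iff₀ hτ]; linarith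
    linarith [add_one_le_exp (-z ^ 2 / τ), neg_div τ (z ^ 2)]
  rw [heatGamma_sq hτ, show 3 / (32 * τ) = (8 * τ)⁻¹ * (3 / 4) by field_simp; ring]
  exact mul_le_mul hpre hexp (by norm_num) (by positivity)

lemma mul_rpow_le_setIntegral_heatGamma_sq {τ x : ℝ} (hτ0 : 0 < τ) (hτ1 : τ ≤ 1)
    (hx : x ∈ Icc (0 : ℝ) 1) :
    3 / 64 * τ ^ (-1/2 : ℝ) ≤ ∫ y in Icc 0 1, heatGamma τ (x - y) ^ 2 := by
  set L := √τ / 2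
  have hL : 0 < L := by positivity
  have hL1 : L ≤ 1 / 2 := by
    have : √τ ≤ 1 := sqrt_le_one.2 hτ1
    simp only [L]
    linarith
  set a := min x (1 - L)
  have hax : a ≤ x := min_le_left _ _
  have hxa : x - L ≤ a := le_min (by linarith) (by linarith [hx.2])
  have hJ : Icc a (a + L) ⊆ Icc 0 1 := Icc_subset_Icc (le_min hx.1 (by linarith))
    (by linarith [min_le_right x (1 - L)])
  have hint : IntegrableOn (fun y => heatGamma τ (x - y) ^ 2) (Icc 0 1) :=
    ((continuous_heatGamma τ).comp (continuous_sub_left x)).pow 2 |>.integrableOn_Icc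
  calc 3 / 64 * τ ^ (-1/2 : ℝ) = ∫ _ in Icc a (a + L), 3 / (32 * τ) := by
        rw [setIntegral_const, Real.volume_real_Icc_of_le (by linarith), add_sub_cancel_left,
          smul_eq_mul, rpow_neg_half_eq_inv_sqrt hτ0.le]
        field_simp
        simp only [L]
        linear_combination (-32) * sq_sqrt hτ0.le
    _ ≤ ∫ y in Icc a (a + L), heatGamma τ (x - y) ^ 2 :=
        setIntegral_mono_on (integrableOn_const measure_Icc_lt_top.ne) (hint.mono_set hJ)
          measurableSet_Icc fun y hy => div_le_heatGamma_sq_of_sq_le hτ0 <| by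
            have : |x - y| ≤ L := abs_le.2 ⟨by linarith [hy.2], by linarith [hy.1]⟩
            calc (x - y) ^ 2 ≤ L ^ 2 := by nlinarith [sq_abs (x - y), abs_nonneg (x - y)]
              _ = τ / 4 := by rw [div_pow, sq_sqrt hτ0.le]; norm_num
    _ ≤ ∫ y in Icc 0 1, heatGamma τ (x - y) ^ 2 :=
        setIntegral_mono_set hint (.of_forall fun _ => sq_nonneg _) hJ.eventuallyLE

end Gaussian

noncomputable def periodizedHeatGamma (τ k a : ℝ) : ℝ := ∑' n : ℤ, heatGamma τ (a + k * n)

section Periodized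

variable {τ k a : ℝ}

lemma periodizedHeatGamma_neg (τ k a : ℝ) :
    periodizedHeatGamma τ k (-a) = periodizedHeatGamma τ k a := by
  rw [periodizedHeatGamma, ← (Equiv.neg ℤ).tsum_eq]
  congr 1 with n
  rw [← heatGamma_neg]
  simp only [Equiv.neg_apply, Int.cast_neg]
  ring_nf

lemma heatGamma_add_mul_le (hτ0 : 0 < τ) (hτ1 : τ ≤ 1) (hk : 1 ≤ k) (ha : |a| ≤ k)
    {n : ℤ} (hn : n ∉ Finset.Icc (-1 : ℤ) 1) :
    heatGamma τ (a + k * n) ≤ 4 * (1 / (n : ℝ) ^ 2) := by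
  have hn' : (n : ℝ) ≤ -2 ∨ 2 ≤ (n : ℝ) := by
    rw [Finset.mem_Icc] at hn
    rcases (by omega : n ≤ -2 ∨ 2 ≤ n) with h | h
    exacts [.inl (by exact_mod_cast h), .inr (by exact_mod_cast h)]
  obtain ⟨ha1, ha2⟩ := abs_le.1 ha
  have hsq : (n : ℝ) ^ 2 ≤ 4 * (a + k * n) ^ 2 := by
    rcases hn' with h | h
    · have : a + k * n ≤ n / 2 := by nlinarith
      nlinarith
    · have : n / 2 ≤ a + k * n := by nlinarith
      nlinarith
  have hn0 : (0 : ℝ) < (n : ℝ) ^ 2 := by rcases hn' with h | h <;> nlinarith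
  have hΓ := heatGamma_mul_sq_le_one hτ0 hτ1 (a + k * n)
  rw [mul_one_div, le_div_iff₀ hn0]
  nlinarith [heatGamma_nonneg hτ0.le (a + k * n)]

lemma summable_four_mul_one_div_int_sq : Summable fun n : ℤ => 4 * (1 / (n : ℝ) ^ 2) :=
  (summable_one_div_int_pow.2 one_lt_two).mul_left 4

lemma summable_heatGamma_add_mul (hτ0 : 0 < τ) (hτ1 : τ ≤ 1) (hk : 1 ≤ k) (ha : |a| ≤ k) :
    Summable fun n : ℤ => heatGamma τ (a + k * n) := by
  rw [← Finset.summable_compl_iff (Finset.Icc (-1) 1)]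
  exact .of_nonneg_of_le (fun _ => heatGamma_nonneg hτ0.le _)
    (fun n => heatGamma_add_mul_le hτ0 hτ1 hk ha n.2)
    (summable_four_mul_one_div_int_sq.subtype _)

lemma heatGamma_le_periodizedHeatGamma (hτ0 : 0 < τ) (hτ1 : τ ≤ 1) (hk : 1 ≤ k)
    (ha : |a| ≤ k) : heatGamma τ a ≤ periodizedHeatGamma τ k a := by
  simpa [periodizedHeatGamma] using (summable_heatGamma_add_mul hτ0 hτ1 hk ha).le_tsum 0
    fun _ _ => heatGamma_nonneg hτ0.le _

lemma periodizedHeatGamma_le (hτ0 : 0 < τ) (hτ1 : τ ≤ 1) (hk : 1 ≤ k) (ha : |a| ≤ k) :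
    periodizedHeatGamma τ k a ≤
      (∑ n ∈ Finset.Icc (-1 : ℤ) 1, heatGamma τ (a + k * n)) + 4 * S₂ := by
  rw [periodizedHeatGamma, ← (summable_heatGamma_add_mul hτ0 hτ1 hk ha).sum_add_tsum_compl,
    ← tsum_mul_left]
  gcongr
  calc ∑' n : ↑(Finset.Icc (-1 : ℤ) 1 : Set ℤ)ᶜ, heatGamma τ (a + k * n)
      ≤ ∑' n : ↑(Finset.Icc (-1 : ℤ) 1 : Set ℤ)ᶜ, 4 * (1 / ((n : ℤ) : ℝ) ^ 2) :=
        (summable_heatGamma_add_mul hτ0 hτ1 hk ha).subtype _ |>.tsum_le_tsum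
          (fun n => heatGamma_add_mul_le hτ0 hτ1 hk ha n.2)
          (summable_four_mul_one_div_int_sq.subtype _)
    _ ≤ ∑' n : ℤ, 4 * (1 / (n : ℝ) ^ 2) :=
        summable_four_mul_one_div_int_sq.tsum_subtype_le _ _ fun _ => by positivity

lemma periodizedHeatGamma_le_rpow (hτ0 : 0 < τ) (hτ1 : τ ≤ 1) (hk : 1 ≤ k) (ha : |a| ≤ k) :
    periodizedHeatGamma τ k a ≤ (3 + 4 * S₂) * τ ^ (-1/2 : ℝ) := by
  have hZ : 0 ≤ S₂ := tsum_nonneg fun _ => by positivity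
  have hone : 1 ≤ τ ^ (-1/2 : ℝ) := one_le_rpow_of_pos_of_le_one_of_nonpos hτ0 hτ1 (by norm_num)
  have hcentral :
      ∑ n ∈ Finset.Icc (-1 : ℤ) 1, heatGamma τ (a + k * n) ≤ 3 * τ ^ (-1/2 : ℝ) :=
    calc _ ≤ ∑ n ∈ Finset.Icc (-1 : ℤ) 1, τ ^ (-1/2 : ℝ) :=
          Finset.sum_le_sum fun _ _ => heatGamma_le_rpow hτ0 _
      _ = 3 * τ ^ (-1/2 : ℝ) := by simp
  nlinarith [periodizedHeatGamma_le hτ0 hτ1 hk ha]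

lemma periodizedHeatGamma_nonneg (hτ : 0 ≤ τ) : 0 ≤ periodizedHeatGamma τ k a :=
  tsum_nonneg fun _ => heatGamma_nonneg hτ _

lemma measurable_periodizedHeatGamma (τ k : ℝ) : Measurable (periodizedHeatGamma τ k) :=
  Measurable.tsum fun _ => (continuous_heatGamma τ).measurable.comp (by fun_prop)

lemma periodizedHeatGamma_sub_le_sum_add (hτ0 : 0 < τ) (hτ1 : τ ≤ 1) (hk : 1 ≤ k) {c : ℝ}
    {y : ℝ} (hy : |c - y| ≤ k) :
    periodizedHeatGamma τ k (c - y) ≤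
      (∑ n ∈ Finset.Icc (-1 : ℤ) 1, heatGamma τ (c + k * n - y)) + 4 * S₂ := by
  simpa only [sub_add_eq_add_sub] using periodizedHeatGamma_le hτ0 hτ1 hk hy

lemma integrableOn_sum_heatGamma_add_const (hτ : 0 < τ) (k c : ℝ) :
    IntegrableOn (fun y => (∑ n ∈ Finset.Icc (-1 : ℤ) 1, heatGamma τ (c + k * n - y))
      + 4 * S₂) (Icc 0 1) :=
  .add (integrable_finsetSum _ fun (n : ℤ) _ =>
    (integrable_heatGamma hτ).comp_sub_left (c + k * n)).integrableOn
    (integrableOn_const measure_Icc_lt_top.ne)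

lemma integrableOn_periodizedHeatGamma_sub (hτ0 : 0 < τ) (hτ1 : τ ≤ 1) (hk : 1 ≤ k) {c : ℝ}
    (hc : ∀ y ∈ Icc (0 : ℝ) 1, |c - y| ≤ k) :
    IntegrableOn (fun y => periodizedHeatGamma τ k (c - y)) (Icc 0 1) := by
  refine Integrable.mono' (integrableOn_sum_heatGamma_add_const hτ0 k c)
    ((measurable_periodizedHeatGamma τ k).comp
      (measurable_const.sub measurable_id)).aestronglyMeasurable
    (ae_restrict_of_forall_mem measurableSet_Icc fun y hy => ?_)
  rw [Real.norm_of_nonneg (periodizedHeatGamma_nonneg hτ0.le)]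
  exact periodizedHeatGamma_sub_le_sum_add hτ0 hτ1 hk (hc y hy)

lemma setIntegral_periodizedHeatGamma_sub_le (hτ0 : 0 < τ) (hτ1 : τ ≤ 1) (hk : 1 ≤ k) {c : ℝ}
    (hc : ∀ y ∈ Icc (0 : ℝ) 1, |c - y| ≤ k) :
    ∫ y in Icc 0 1, periodizedHeatGamma τ k (c - y) ≤ 3 + 4 * S₂ := by
  calc ∫ y in Icc 0 1, periodizedHeatGamma τ k (c - y)
      ≤ ∫ y in Icc 0 1, ((∑ n ∈ Finset.Icc (-1 : ℤ) 1, heatGamma τ (c + k * n - y))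
          + 4 * S₂) :=
        setIntegral_mono_on (integrableOn_periodizedHeatGamma_sub hτ0 hτ1 hk hc)
          (integrableOn_sum_heatGamma_add_const hτ0 k c) measurableSet_Icc
          fun y hy => periodizedHeatGamma_sub_le_sum_add hτ0 hτ1 hk (hc y hy)
    _ = (∑ n ∈ Finset.Icc (-1 : ℤ) 1, ∫ y in Icc 0 1, heatGamma τ (c + k * n - y))
          + 4 * S₂ := by
        rw [integral_add (integrable_finsetSum _ fun (n : ℤ) _ =>
            ((integrable_heatGamma hτ0).comp_sub_left _).integrableOn)
          (integrableOn_const measure_Icc_lt_top.ne), integral_finsetSum _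
          fun n _ => ((integrable_heatGamma hτ0).comp_sub_left _).integrableOn,
          setIntegral_const, Real.volume_real_Icc_of_le zero_le_one, sub_zero, one_smul]
    _ ≤ (∑ _n ∈ Finset.Icc (-1 : ℤ) 1, (1 : ℝ)) + 4 * S₂ := by
        gcongr with n
        exact setIntegral_heatGamma_sub_le hτ0 _ _
    _ = 3 + 4 * S₂ := by simp

end Periodized

lemma two_mul_rpow_le_intervalIntegral {F : ℝ → ℝ} {c C δ : ℝ} (hF : Measurable F)
    (hc : 0 ≤ c) (hδ : 0 ≤ δ) (hlow : ∀ τ ∈ Ioo 0 δ, c * τ ^ (-1/2 : ℝ) ≤ F τ)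
    (hup : ∀ τ ∈ Ioo 0 δ, F τ ≤ C * τ ^ (-1/2 : ℝ)) :
    2 * c * δ ^ (1/2 : ℝ) ≤ ∫ τ in 0..δ, F τ := by
  have hpow : IntervalIntegrable (fun τ : ℝ => τ ^ (-1/2 : ℝ)) volume 0 δ :=
    intervalIntegral.intervalIntegrable_rpow' (by norm_num)
  have hFint : IntervalIntegrable F volume 0 δ := by
    rw [intervalIntegrable_iff_integrableOn_Ioo_of_le hδ]
    refine Integrable.mono' ((hpow.const_mul C).1.mono_set Ioo_subset_Ioc_self)
      hF.aestronglyMeasurable (ae_restrict_of_forall_mem measurableSet_Ioo fun τ hτ => ?_)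
    rw [Real.norm_of_nonneg ((mul_nonneg hc (rpow_nonneg hτ.1.le _)).trans (hlow τ hτ))]
    exact hup τ hτ
  calc 2 * c * δ ^ (1/2 : ℝ) = ∫ τ in 0..δ, c * τ ^ (-1/2 : ℝ) := by
        rw [intervalIntegral.integral_const_mul, integral_rpow (.inl (by norm_num))]
        norm_num
        ring
    _ ≤ ∫ τ in 0..δ, F τ := intervalIntegral.integral_mono_on_of_le_Ioo hδ (hpow.const_mul c)
        hFint hlow

lemma integrableOn_sq_of_le {α : Type*} [MeasurableSpace α] {μ : Measure α}
    {s : Set α} {f : α → ℝ} {M : ℝ} (hs : MeasurableSet s) (hf : IntegrableOn f s μ)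
    (hf0 : ∀ y ∈ s, 0 ≤ f y) (hfM : ∀ y ∈ s, f y ≤ M) :
    IntegrableOn (fun y => f y ^ 2) s μ :=
  (hf.const_mul M).mono' (hf.1.pow 2) <| ae_restrict_of_forall_mem hs fun y hy => by
    rw [Real.norm_of_nonneg (sq_nonneg _), sq]
    exact mul_le_mul_of_nonneg_right (hfM y hy) (hf0 y hy)

lemma setIntegral_sq_le_mul {α : Type*} [MeasurableSpace α] {μ : Measure α}
    {s : Set α} {f : α → ℝ} {M B : ℝ} (hs : MeasurableSet s) (hf : IntegrableOn f s μ)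
    (hf0 : ∀ y ∈ s, 0 ≤ f y) (hfM : ∀ y ∈ s, f y ≤ M) (hM : 0 ≤ M)
    (hfB : ∫ y in s, f y ∂μ ≤ B) :
    ∫ y in s, f y ^ 2 ∂μ ≤ M * B :=
  calc ∫ y in s, f y ^ 2 ∂μ ≤ ∫ y in s, M * f y ∂μ :=
        setIntegral_mono_on (integrableOn_sq_of_le hs hf hf0 hfM) (hf.const_mul M) hs
          fun y hy => by rw [sq]; exact mul_le_mul_of_nonneg_right (hfM y hy) (hf0 y hy)
    _ ≤ M * B := by rw [integral_const_mul]; exact mul_le_mul_of_nonneg_left hfB hM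

structure HasGaussianBounds (p : ℝ → ℝ → ℝ → ℝ) (M B : ℝ) : Prop where
  measurable (x : ℝ) : Measurable fun v : ℝ × ℝ => p v.1 x v.2
  heatGamma_le {τ x y : ℝ} : 0 < τ → τ ≤ 1 → x ∈ Icc (0 : ℝ) 1 → y ∈ Icc (0 : ℝ) 1 →
    heatGamma τ (x - y) ≤ p τ x y
  le_rpow {τ x y : ℝ} : 0 < τ → τ ≤ 1 → x ∈ Icc (0 : ℝ) 1 → y ∈ Icc (0 : ℝ) 1 →
    p τ x y ≤ M * τ ^ (-1/2 : ℝ)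
  integrableOn {τ x : ℝ} : 0 < τ → τ ≤ 1 → x ∈ Icc (0 : ℝ) 1 → IntegrableOn (p τ x) (Icc 0 1)
  setIntegral_le {τ x : ℝ} : 0 < τ → τ ≤ 1 → x ∈ Icc (0 : ℝ) 1 → ∫ y in Icc 0 1, p τ x y ≤ B

namespace HasGaussianBounds

variable {p : ℝ → ℝ → ℝ → ℝ} {M B τ x : ℝ}

lemma nonneg (hp : HasGaussianBounds p M B) {y : ℝ} (hτ0 : 0 < τ) (hτ1 : τ ≤ 1)
    (hx : x ∈ Icc (0 : ℝ) 1) (hy : y ∈ Icc (0 : ℝ) 1) : 0 ≤ p τ x y :=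
  (heatGamma_nonneg hτ0.le _).trans (hp.heatGamma_le hτ0 hτ1 hx hy)

lemma integrableOn_sq (hp : HasGaussianBounds p M B) (hτ0 : 0 < τ) (hτ1 : τ ≤ 1)
    (hx : x ∈ Icc (0 : ℝ) 1) : IntegrableOn (fun y => p τ x y ^ 2) (Icc 0 1) :=
  integrableOn_sq_of_le measurableSet_Icc (hp.integrableOn hτ0 hτ1 hx)
    (fun _ hy => hp.nonneg hτ0 hτ1 hx hy) fun _ hy => hp.le_rpow hτ0 hτ1 hx hy

lemma setIntegral_sq_le (hp : HasGaussianBounds p M B) (hτ0 : 0 < τ) (hτ1 : τ ≤ 1)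
    (hx : x ∈ Icc (0 : ℝ) 1) : ∫ y in Icc 0 1, p τ x y ^ 2 ≤ M * B * τ ^ (-1/2 : ℝ) := by
  rw [mul_right_comm]
  exact setIntegral_sq_le_mul measurableSet_Icc (hp.integrableOn hτ0 hτ1 hx)
    (fun _ hy => hp.nonneg hτ0 hτ1 hx hy) (fun _ hy => hp.le_rpow hτ0 hτ1 hx hy)
    ((hp.nonneg hτ0 hτ1 hx hx).trans (hp.le_rpow hτ0 hτ1 hx hx))
    (hp.setIntegral_le hτ0 hτ1 hx)

lemma mul_rpow_le_setIntegral_sq (hp : HasGaussianBounds p M B) (hτ0 : 0 < τ) (hτ1 : τ ≤ 1)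
    (hx : x ∈ Icc (0 : ℝ) 1) : 3 / 64 * τ ^ (-1/2 : ℝ) ≤ ∫ y in Icc 0 1, p τ x y ^ 2 :=
  (mul_rpow_le_setIntegral_heatGamma_sq hτ0 hτ1 hx).trans <|
    setIntegral_mono_on
      (((continuous_heatGamma τ).comp (continuous_sub_left x)).pow 2).integrableOn_Icc
      (hp.integrableOn_sq hτ0 hτ1 hx) measurableSet_Icc fun _ hy =>
        pow_le_pow_left₀ (heatGamma_nonneg hτ0.le _) (hp.heatGamma_le hτ0 hτ1 hx hy) 2

lemma measurable_setIntegral_sq (hp : HasGaussianBounds p M B) (x : ℝ) :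
    Measurable fun τ => ∫ y in Icc 0 1, p τ x y ^ 2 :=
  ((hp.measurable x).pow_const 2).stronglyMeasurable.integral_prod_right'.measurable

theorem mul_rpow_le_intervalIntegral (hp : HasGaussianBounds p M B) {s t : ℝ} (hs : 0 ≤ s)
    (hst : s ≤ t) (ht : t ≤ 1) (hx : x ∈ Icc (0 : ℝ) 1) :
    3 / 32 * (t - s) ^ (1/2 : ℝ) ≤ ∫ r in s..t, ∫ y in Icc 0 1, p (t - r) x y ^ 2 := by
  rw [intervalIntegral.integral_comp_sub_left (fun τ => ∫ y in Icc 0 1, p τ x y ^ 2), sub_self,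
    show (3 / 32 : ℝ) = 2 * (3 / 64) by norm_num]
  exact two_mul_rpow_le_intervalIntegral (hp.measurable_setIntegral_sq x) (by norm_num)
    (by linarith) (fun τ hτ => hp.mul_rpow_le_setIntegral_sq hτ.1 (by linarith [hτ.2]) hx)
    (fun τ hτ => hp.setIntegral_sq_le hτ.1 (by linarith [hτ.2]) hx)

end HasGaussianBounds

lemma abs_sub_le_one_of_mem_Icc {x y : ℝ} (hx : x ∈ Icc (0 : ℝ) 1)
    (hy : y ∈ Icc (0 : ℝ) 1) : |x - y| ≤ 1 :=
  Real.dist_eq x y ▸ Real.dist_le_of_mem_Icc_01 hx hy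

lemma abs_add_le_two_of_mem_Icc {x y : ℝ} (hx : x ∈ Icc (0 : ℝ) 1)
    (hy : y ∈ Icc (0 : ℝ) 1) : |x + y| ≤ 2 :=
  abs_le.2 ⟨by linarith [hx.1, hy.1], by linarith [hx.2, hy.2]⟩

lemma abs_neg_sub_le_two_of_mem_Icc {x y : ℝ} (hx : x ∈ Icc (0 : ℝ) 1)
    (hy : y ∈ Icc (0 : ℝ) 1) : |-x - y| ≤ 2 := by
  rw [← neg_add', abs_neg]
  exact abs_add_le_two_of_mem_Icc hx hy

lemma pPer_eq_periodizedHeatGamma (τ x y : ℝ) :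
    pPer τ x y = periodizedHeatGamma τ 1 (x - y) := by
  simp [pPer, periodizedHeatGamma]

lemma pNeu_eq_periodizedHeatGamma {τ x y : ℝ} (hτ0 : 0 < τ) (hτ1 : τ ≤ 1)
    (hx : x ∈ Icc (0 : ℝ) 1) (hy : y ∈ Icc (0 : ℝ) 1) :
    pNeu τ x y = periodizedHeatGamma τ 2 (x - y) + periodizedHeatGamma τ 2 (-x - y) := by
  rw [pNeu, (summable_heatGamma_add_mul hτ0 hτ1 one_le_two
      ((abs_sub_le_one_of_mem_Icc hx hy).trans one_le_two)).tsum_add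
      (summable_heatGamma_add_mul hτ0 hτ1 one_le_two (abs_add_le_two_of_mem_Icc hx hy)),
    ← periodizedHeatGamma_neg τ 2 (-x - y), neg_sub, sub_neg_eq_add, add_comm y x]
  rfl

lemma hasGaussianBounds_pPer :
    HasGaussianBounds pPer (3 + 4 * S₂)
      (3 + 4 * S₂) where
  measurable x := Measurable.tsum fun _ => by unfold heatGamma; fun_prop
  heatGamma_le hτ0 hτ1 hx hy := pPer_eq_periodizedHeatGamma .. ▸
    heatGamma_le_periodizedHeatGamma hτ0 hτ1 le_rfl (abs_sub_le_one_of_mem_Icc hx hy)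
  le_rpow hτ0 hτ1 hx hy := pPer_eq_periodizedHeatGamma .. ▸
    periodizedHeatGamma_le_rpow hτ0 hτ1 le_rfl (abs_sub_le_one_of_mem_Icc hx hy)
  integrableOn {τ x} hτ0 hτ1 hx := by
    rw [funext (pPer_eq_periodizedHeatGamma τ x)]
    exact integrableOn_periodizedHeatGamma_sub hτ0 hτ1 le_rfl fun y hy =>
      abs_sub_le_one_of_mem_Icc hx hy
  setIntegral_le {τ x} hτ0 hτ1 hx := by
    simpa only [pPer_eq_periodizedHeatGamma] using
      setIntegral_periodizedHeatGamma_sub_le hτ0 hτ1 le_rfl fun y hy =>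
        abs_sub_le_one_of_mem_Icc hx hy

lemma hasGaussianBounds_pNeu :
    HasGaussianBounds pNeu (2 * (3 + 4 * S₂))
      (2 * (3 + 4 * S₂)) where
  measurable x := Measurable.tsum fun _ => by unfold heatGamma; fun_prop
  heatGamma_le hτ0 hτ1 hx hy := by
    rw [pNeu_eq_periodizedHeatGamma hτ0 hτ1 hx hy]
    exact (heatGamma_le_periodizedHeatGamma hτ0 hτ1 one_le_two
      ((abs_sub_le_one_of_mem_Icc hx hy).trans one_le_two)).trans
      (le_add_of_nonneg_right (periodizedHeatGamma_nonneg hτ0.le))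
  le_rpow {τ x y} hτ0 hτ1 hx hy := by
    rw [pNeu_eq_periodizedHeatGamma hτ0 hτ1 hx hy, two_mul, add_mul]
    exact add_le_add (periodizedHeatGamma_le_rpow hτ0 hτ1 one_le_two
      ((abs_sub_le_one_of_mem_Icc hx hy).trans one_le_two))
      (periodizedHeatGamma_le_rpow hτ0 hτ1 one_le_two
        (abs_neg_sub_le_two_of_mem_Icc hx hy))
  integrableOn {τ x} hτ0 hτ1 hx :=
    ((integrableOn_periodizedHeatGamma_sub hτ0 hτ1 one_le_two fun _ hy =>
      (abs_sub_le_one_of_mem_Icc hx hy).trans one_le_two).add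
    (integrableOn_periodizedHeatGamma_sub hτ0 hτ1 one_le_two fun _ hy =>
      abs_neg_sub_le_two_of_mem_Icc hx hy)).congr_fun
    (fun y hy => (pNeu_eq_periodizedHeatGamma hτ0 hτ1 hx hy).symm) measurableSet_Icc
  setIntegral_le {τ x} hτ0 hτ1 hx := by
    have hc₁ : ∀ y ∈ Icc (0 : ℝ) 1, |x - y| ≤ 2 := fun _ hy =>
      (abs_sub_le_one_of_mem_Icc hx hy).trans one_le_two
    have hc₂ : ∀ y ∈ Icc (0 : ℝ) 1, |-x - y| ≤ 2 := fun _ hy =>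
      abs_neg_sub_le_two_of_mem_Icc hx hy
    rw [setIntegral_congr_fun measurableSet_Icc
        fun y hy => pNeu_eq_periodizedHeatGamma hτ0 hτ1 hx hy,
      integral_add (integrableOn_periodizedHeatGamma_sub hτ0 hτ1 one_le_two hc₁)
        (integrableOn_periodizedHeatGamma_sub hτ0 hτ1 one_le_two hc₂), two_mul]
    exact add_le_add (setIntegral_periodizedHeatGamma_sub_le hτ0 hτ1 one_le_two hc₁)
      (setIntegral_periodizedHeatGamma_sub_le hτ0 hτ1 one_le_two hc₂)

/-- **Lower bound for the conditional variance of the stochastic heat convolution via the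
heat kernel.** -/
theorem heat_convolution_variance_lower_bound
    (p : ℝ → ℝ → ℝ → ℝ) (hp : p = pPer ∨ p = pNeu) :
    ∃ c : ℝ, 0 < c ∧ ∀ s t : ℝ, 0 ≤ s → s < t → t ≤ 1 →
      ∀ x ∈ Set.Icc (0:ℝ) 1,
        c * (t - s) ^ ((1:ℝ)/2)
          ≤ ∫ r in s..t, ∫ y in Set.Icc (0:ℝ) 1, (p (t - r) x y) ^ 2 := by
  refine ⟨3 / 32, by norm_num, fun s t hs hst ht x hx => ?_⟩
  rcases hp with rfl | rfl
  · exact hasGaussianBounds_pPer.mul_rpow_le_intervalIntegral hs hst.le ht hx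
  · exact hasGaussianBounds_pNeu.mul_rpow_le_intervalIntegral hs hst.le ht hx
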